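/- arXiv:1406.3683 — 8 statements merged into one kernel-verified Lean document; each statement's English description precedes it below -/
import Mathlib

section
/- Let G be a finite connected simple graph (possibly containing twins). Then χ_rlid(G) ≤ χ_rlid(G/R), where G/R is the maximal twin-free induced subgraph of G. In other words, every rlid-coloring of G/R with k colors yields an rlid-coloring of G with k colors. -/
open SimpleGraph Set

variable {V : Type*}

/-- The closed neighborhood of a vertex. -/
def closedNbhd (G : SimpleGraph V) (v : V) : Set V := insert v (G.neighborSet v)

/-- A (not necessarily proper) coloring `c : V → Fin k` is a relaxed locally identifying coloring
(rlid-coloring) if any two adjacent vertices with distinct closed neighborhoods receive distinct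
sets of colors on their closed neighborhoods. -/
def IsRlidColoring (G : SimpleGraph V) {k : ℕ} (c : V → Fin k) : Prop :=
  ∀ u v : V, G.Adj u v → closedNbhd G u ≠ closedNbhd G v →
    c '' closedNbhd G u ≠ c '' closedNbhd G v

/-- The relaxed locally identifying chromatic number: the least `k` such that `G` admits an
rlid-coloring with `k` colors. -/
noncomputable def rlidChromNum (G : SimpleGraph V) : ℕ :=
  sInf {k : ℕ | ∃ c : V → Fin k, IsRlidColoring G c}

/-- A graph is twin-free if distinct vertices have distinct closed neighborhoods. -/
def TwinFree (G : SimpleGraph V) : Prop :=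
  ∀ u v : V, closedNbhd G u = closedNbhd G v → u = v

/-- `T` is a set of representatives of the twin equivalence relation
(`u R v ↔ N[u] = N[v]`): it contains exactly one vertex from each equivalence class.
The induced subgraph `G.induce T` is then the maximal twin-free induced subgraph `G/R`. -/
def IsTwinRepSet (G : SimpleGraph V) (T : Set V) : Prop :=
  ∀ v : V, ∃! t, t ∈ T ∧ closedNbhd G v = closedNbhd G t

/-- For a finite connected graph `G`, `χ_rlid(G) ≤ χ_rlid(G/R)`; indeed every
rlid-coloring of `G/R` with `k` colors yields an rlid-coloring of `G` with `k` colors. -/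
theorem rlid_le_rlid_of_quotient {V : Type*} [Fintype V] (G : SimpleGraph V)
    (hconn : G.Connected) (T : Set V) (hT : IsTwinRepSet G T) :
    (∀ (k : ℕ) (c : T → Fin k), IsRlidColoring (G.induce T) c →
      ∃ c' : V → Fin k, IsRlidColoring G c') ∧
    rlidChromNum G ≤ rlidChromNum (G.induce T) := by
  classical
  -- choose representatives
  choose r hr hu using fun v => hT v
  have hrT : ∀ v, r v ∈ T := fun v => (hr v).1
  have hrN : ∀ v, closedNbhd G v = closedNbhd G (r v) := fun v => (hr v).2
  have hsymm : ∀ x y : V, x ∈ closedNbhd G y ↔ y ∈ closedNbhd G x := by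
    intro x y
    simp only [closedNbhd, Set.mem_insert_iff, SimpleGraph.mem_neighborSet]
    constructor
    · rintro (h | h)
      · exact Or.inl h.symm
      · exact Or.inr h.symm
    · rintro (h | h)
      · exact Or.inl h.symm
      · exact Or.inr h.symm
  have hmem : ∀ x u : V, x ∈ closedNbhd G u ↔ r x ∈ closedNbhd G u := by
    intro x u
    rw [hsymm x u, hrN x, ← hsymm (r x) u]
  have hrfix : ∀ t : V, t ∈ T → r t = t := by
    intro t ht
    exact (hu t t ⟨ht, rfl⟩).symm
  -- membership in the induced closed neighborhood
  have hindmem : ∀ (t : T) (u : V),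
      t ∈ closedNbhd (G.induce T) ⟨r u, hrT u⟩ ↔ (t : V) ∈ closedNbhd G (r u) := by
    intro t u
    simp only [closedNbhd, Set.mem_insert_iff, SimpleGraph.mem_neighborSet,
      SimpleGraph.comap_adj, Function.Embedding.coe_subtype, Subtype.ext_iff]
  have key : ∀ (k : ℕ) (c : T → Fin k), IsRlidColoring (G.induce T) c →
      ∃ c' : V → Fin k, IsRlidColoring G c' := by
    intro k c hc
    refine ⟨fun v => c ⟨r v, hrT v⟩, ?_⟩
    have himg : ∀ u : V,
        (fun v => c ⟨r v, hrT v⟩) '' closedNbhd G u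
          = c '' closedNbhd (G.induce T) ⟨r u, hrT u⟩ := by
      intro u
      ext b
      constructor
      · rintro ⟨x, hx, rfl⟩
        refine ⟨⟨r x, hrT x⟩, ?_, rfl⟩
        rw [hindmem]
        have := (hmem x (r u)).mp (by rwa [hrN u] at hx)
        exact this
      · rintro ⟨t, ht, rfl⟩
        have htu : (t : V) ∈ closedNbhd G u := by
          rw [hrN u]; exact (hindmem t u).mp ht
        refine ⟨(t : V), htu, ?_⟩
        have : (⟨r (t : V), hrT (t : V)⟩ : T) = t :=
          Subtype.ext (hrfix (t : V) t.2)
        exact congrArg c this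
    intro u v hadj hne
    have hne' : r u ≠ r v := by
      intro h
      apply hne
      rw [hrN u, hrN v, h]
    have hadj' : (G.induce T).Adj ⟨r u, hrT u⟩ ⟨r v, hrT v⟩ := by
      have hv : v ∈ closedNbhd G (r u) := by
        rw [← hrN u, hsymm]
        exact Set.mem_insert_iff.mpr (Or.inr (SimpleGraph.mem_neighborSet G v u |>.mpr hadj.symm))
      have hrv : r v ∈ closedNbhd G (r u) := (hmem v (r u)).mp hv
      rcases Set.mem_insert_iff.mp hrv with h | h
      · exact absurd h.symm hne'
      · exact SimpleGraph.mem_neighborSet G (r u) (r v) |>.mp h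
    have hnbne : closedNbhd (G.induce T) ⟨r u, hrT u⟩ ≠ closedNbhd (G.induce T) ⟨r v, hrT v⟩ := by
      intro h
      apply hne
      rw [hrN u, hrN v]
      ext x
      rw [hmem x (r u), hmem x (r v), ← hindmem ⟨r x, hrT x⟩ u, ← hindmem ⟨r x, hrT x⟩ v, h]
    rw [himg u, himg v]
    exact hc _ _ hadj' hnbne
  refine ⟨key, ?_⟩
  -- the set of valid k's for the induced graph is nonempty
  haveI : Fintype T := Fintype.ofFinite T
  have hne' : {k : ℕ | ∃ c : T → Fin k, IsRlidColoring (G.induce T) c}.Nonempty := by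
    refine ⟨Fintype.card T, (Fintype.equivFin T : T → Fin _), ?_⟩
    intro u v _ hne himg
    apply hne
    have := congrArg (Set.preimage (Fintype.equivFin T)) himg
    rwa [Set.preimage_image_eq _ (Fintype.equivFin T).injective,
      Set.preimage_image_eq _ (Fintype.equivFin T).injective] at this
  have hmemInf := Nat.sInf_mem hne'
  obtain ⟨c, hcrlid⟩ := hmemInf
  obtain ⟨c', hc'⟩ := key _ c hcrlid
  exact Nat.sInf_le ⟨c', hc'⟩
end

section
/- Let G be a finite connected simple graph. Then χ_rlid(G/R) − t(G) ≤ χ_rlid(G), where G/R is the maximal twin-free induced subgraph of G and t(G) is the number of twin-equivalence classes of G having at least two vertices. -/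
open SimpleGraph Set

variable {V : Type*}

/-- The number `t(G)` of twin-equivalence classes of `G` having at least two vertices. -/
noncomputable def numBigTwinClasses (G : SimpleGraph V) : ℕ :=
  Nat.card {s : Set V // (∃ v, s = {u | closedNbhd G u = closedNbhd G v}) ∧ ¬ s.Subsingleton}

lemma mem_closedNbhd_comm {G : SimpleGraph V} {u w : V} :
    w ∈ closedNbhd G u ↔ u ∈ closedNbhd G w := by
  simp only [closedNbhd, Set.mem_insert_iff, SimpleGraph.mem_neighborSet]
  constructor <;> rintro (h | h)
  · exact Or.inl h.symm
  · exact Or.inr h.symm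
  · exact Or.inl h.symm
  · exact Or.inr h.symm

lemma mem_closedNbhd_induce {G : SimpleGraph V} {T : Set V} {x y : T} :
    y ∈ closedNbhd (G.induce T) x ↔ (y : V) ∈ closedNbhd G (x : V) := by
  simp only [closedNbhd, Set.mem_insert_iff, SimpleGraph.mem_neighborSet, comap_adj,
    Function.Embedding.coe_subtype, Subtype.ext_iff]

/-- For a finite connected graph `G`, `χ_rlid(G/R) − t(G) ≤ χ_rlid(G)`. -/
theorem rlid_quotient_sub_le {V : Type*} [Fintype V] (G : SimpleGraph V)
    (hconn : G.Connected) (T : Set V) (hT : IsTwinRepSet G T) :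
    rlidChromNum (G.induce T) - numBigTwinClasses G ≤ rlidChromNum G := by
  classical
  set k := rlidChromNum G with hk
  set t := numBigTwinClasses G with ht
  -- the set of admissible color numbers for G is nonempty
  have hne : {n : ℕ | ∃ c : V → Fin n, IsRlidColoring G c}.Nonempty := by
    refine ⟨Fintype.card V, Fintype.equivFin V, ?_⟩
    intro u v _ hN himg
    exact hN (Set.image_injective.mpr (Fintype.equivFin V).injective himg)
  obtain ⟨c, hc⟩ : ∃ c : V → Fin k, IsRlidColoring G c := Nat.sInf_mem hne
  -- equivalence class function
  set cls : V → Set V := fun w => {x | closedNbhd G x = closedNbhd G w} with hcls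
  have hclsmem : ∀ w : V, w ∈ cls w := fun w => rfl
  have hclseq : ∀ {w w' : V}, closedNbhd G w = closedNbhd G w' → cls w = cls w' := by
    intro w w' h
    ext x; simp only [hcls, Set.mem_setOf_eq, h]
  -- the big classes
  have e : {s : Set V // (∃ v, s = cls v) ∧ ¬ s.Subsingleton} ≃ Fin t :=
    Finite.equivFinOfCardEq rfl
  -- the new coloring
  set c2 : T → Fin (k + t) := fun x =>
    if h : ¬ (cls (x : V)).Subsingleton then
      Fin.natAdd k (e ⟨cls (x : V), ⟨(x : V), rfl⟩, h⟩)
    else Fin.castAdd t (c (x : V)) with hc2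
  -- key: equality of c2-images implies inclusion of c-images
  have key : ∀ x y : T,
      c2 '' closedNbhd (G.induce T) x ⊆ c2 '' closedNbhd (G.induce T) y →
      c '' closedNbhd G (x : V) ⊆ c '' closedNbhd G (y : V) := by
    rintro x y hsub _ ⟨w, hw, rfl⟩
    obtain ⟨r, ⟨⟨hrT, hrN⟩, -⟩⟩ := hT w
    have hrx : (⟨r, hrT⟩ : T) ∈ closedNbhd (G.induce T) x := by
      rw [mem_closedNbhd_induce]
      show r ∈ closedNbhd G (x : V)
      rw [mem_closedNbhd_comm, ← hrN, ← mem_closedNbhd_comm]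
      exact hw
    obtain ⟨r', hr', hcr'⟩ := hsub ⟨_, hrx, rfl⟩
    rw [mem_closedNbhd_induce] at hr'
    by_cases hbig : ¬ (cls r).Subsingleton
    · -- r is in a big class; r' must be in the same class
      have hbw : cls w = cls r := hclseq hrN
      have h1 : c2 ⟨r, hrT⟩ = Fin.natAdd k (e ⟨cls r, ⟨r, rfl⟩, hbig⟩) := by
        simp only [hc2, dif_pos hbig]
      by_cases hbig' : ¬ (cls (r' : V)).Subsingleton
      · have h2 : c2 r' = Fin.natAdd k (e ⟨cls (r' : V), ⟨(r' : V), rfl⟩, hbig'⟩) := by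
          simp only [hc2, dif_pos hbig']
        rw [h2, h1] at hcr'
        have : cls (r' : V) = cls r := by
          have hval := congrArg Fin.val hcr'
          simp only [Fin.coe_natAdd] at hval
          have hij : (e ⟨cls (r' : V), ⟨(r' : V), rfl⟩, hbig'⟩)
              = e ⟨cls r, ⟨r, rfl⟩, hbig⟩ := Fin.ext (by omega)
          exact Subtype.ext_iff.mp (e.injective hij)
        -- r' has same closed nbhd as r
        have hN' : closedNbhd G (r' : V) = closedNbhd G r := by
          have : (r' : V) ∈ cls r := this ▸ hclsmem (r' : V)
          exact this
        -- hence w ∈ N[y]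
        have hwy : w ∈ closedNbhd G (y : V) := by
          rw [mem_closedNbhd_comm, hrN, ← hN', ← mem_closedNbhd_comm]
          exact hr'
        exact ⟨w, hwy, rfl⟩
      · exfalso
        have h2 : c2 r' = Fin.castAdd t (c (r' : V)) := by
          simp only [hc2, dif_neg hbig']
        rw [h2, h1] at hcr'
        have := congrArg Fin.val hcr'
        simp only [Fin.coe_castAdd, Fin.coe_natAdd] at this
        omega
    · -- small class: r = w
      push_neg at hbig
      have hrw : w = r := hbig hrN (hclsmem r)
      have h1 : c2 ⟨r, hrT⟩ = Fin.castAdd t (c r) := by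
        simp only [hc2, dif_neg (not_not.mpr hbig)]
      by_cases hbig' : ¬ (cls (r' : V)).Subsingleton
      · exfalso
        have h2 : c2 r' = Fin.natAdd k (e ⟨cls (r' : V), ⟨(r' : V), rfl⟩, hbig'⟩) := by
          simp only [hc2, dif_pos hbig']
        rw [h2, h1] at hcr'
        have := congrArg Fin.val hcr'
        simp only [Fin.coe_castAdd, Fin.coe_natAdd] at this
        omega
      · have h2 : c2 r' = Fin.castAdd t (c (r' : V)) := by
          simp only [hc2, dif_neg hbig']
        rw [h2, h1] at hcr'
        have hcc : c (r' : V) = c r := by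
          have := congrArg Fin.val hcr'
          simp only [Fin.coe_castAdd] at this
          exact Fin.ext this
        exact ⟨r', hr', by rw [hcc, hrw]⟩
  -- c2 is an rlid coloring of the induced graph
  have hrlid : IsRlidColoring (G.induce T) c2 := by
    intro x y hadj _ himg
    have hadj' : G.Adj (x : V) (y : V) := hadj
    have hxyV : (x : V) ≠ (y : V) := hadj'.ne
    have hNxy : closedNbhd G (x : V) ≠ closedNbhd G (y : V) := by
      intro h
      obtain ⟨r, ⟨-, hudef⟩⟩ := hT (x : V)
      exact hxyV ((hudef _ ⟨x.2, rfl⟩).trans (hudef _ ⟨y.2, h⟩).symm)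
    have := hc (x : V) (y : V) hadj' hNxy
    exact this (Set.Subset.antisymm (key x y himg.le) (key y x himg.ge))
  have hle : rlidChromNum (G.induce T) ≤ k + t := Nat.sInf_le ⟨c2, hrlid⟩
  omega
end

section
/- Let G be a finite simple graph of order n and let G/R be its maximal twin-free induced subgraph. Then log₂(ω(G/R)) + 1 ≤ χ_rlid(G) ≤ n; equivalently, ω(G/R) ≤ 2^(χ_rlid(G) − 1) and χ_rlid(G) ≤ n. -/
/-!
Colour `G` with an optimal rlid-colouring `c` and let `K` be a clique of `G/R`. Every closed
neighbourhood of a vertex of `K` contains a fixed vertex `t₀ ∈ K`, so every colour set `c(N[t])`,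
`t ∈ K`, contains the colour `c(t₀)`; these sets are pairwise distinct because the vertices of `K`
are adjacent and have distinct closed neighbourhoods. There are only `2 ^ (k - 1)` sets of colours
containing a given colour. The upper bound comes from any injective colouring.
-/

open SimpleGraph Set

variable {V : Type*}

open Finset

theorem Finset.card_le_two_pow_of_injOn_of_forall_mem {ι α : Type*} [Fintype α] [DecidableEq α]
    {f : ι → Finset α} {s : Finset ι} {a : α} (hf : Set.InjOn f s) (ha : ∀ i ∈ s, a ∈ f i) :
    #s ≤ 2 ^ (Fintype.card α - 1) := by
  have hinj : Set.InjOn (fun i ↦ (f i).erase a) s := fun i hi j hj hij ↦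
    hf hi hj (by rw [← insert_erase (ha i hi), ← insert_erase (ha j hj)]; exact congrArg _ hij)
  have hmaps : ∀ i ∈ s, (f i).erase a ∈ (univ.erase a).powerset := fun i _ ↦
    mem_powerset.mpr (erase_subset_erase _ (subset_univ _))
  simpa [card_powerset, card_erase_of_mem] using card_le_card_of_injOn _ hmaps hinj

variable {G : SimpleGraph V}

theorem IsTwinRepSet.injOn_closedNbhd {T : Set V} (hT : IsTwinRepSet G T) :
    Set.InjOn (closedNbhd G) T := fun t ht _ ht' h ↦
  (hT t).unique ⟨ht, rfl⟩ ⟨ht', h⟩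

theorem self_mem_closedNbhd (v : V) : v ∈ closedNbhd G v := Set.mem_insert _ _

theorem SimpleGraph.IsClique.mem_closedNbhd {s : Set V} (hs : G.IsClique s) {u v : V} (hu : u ∈ s)
    (hv : v ∈ s) : v ∈ closedNbhd G u := by
  obtain rfl | huv := eq_or_ne u v
  · exact self_mem_closedNbhd u
  · exact Set.mem_insert_of_mem _ (hs hu hv huv)

theorem IsRlidColoring.card_le_of_isClique {k : ℕ} {c : V → Fin k} (hc : IsRlidColoring G c)
    {s : Finset V} (hs : G.IsClique (s : Set V)) (hN : Set.InjOn (closedNbhd G) s) :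
    #s ≤ 2 ^ (k - 1) := by
  classical
  obtain rfl | ⟨t₀, ht₀⟩ := s.eq_empty_or_nonempty
  · simp
  have hcolors : Set.InjOn (fun t ↦ (c '' closedNbhd G t).toFinset) s := by
    intro t ht t' ht' h
    by_contra hne
    exact hc t t' (hs ht ht' hne) (fun h' ↦ hne (hN ht ht' h')) (Set.toFinset_inj.mp h)
  simpa using card_le_two_pow_of_injOn_of_forall_mem hcolors (a := c t₀)
    fun t ht ↦ Set.mem_toFinset.mpr ⟨t₀, hs.mem_closedNbhd ht ht₀, rfl⟩

theorem isRlidColoring_of_injective {k : ℕ} {c : V → Fin k} (hc : Function.Injective c) :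
    IsRlidColoring G c := fun _ _ _ hne h ↦ hne (Set.image_injective.mpr hc h)

theorem exists_isRlidColoring_card [Fintype V] :
    ∃ c : V → Fin (Fintype.card V), IsRlidColoring G c :=
  ⟨Fintype.equivFin V, isRlidColoring_of_injective (Fintype.equivFin V).injective⟩

theorem rlidChromNum_le_card [Fintype V] : rlidChromNum G ≤ Fintype.card V :=
  Nat.sInf_le exists_isRlidColoring_card

theorem exists_isRlidColoring_rlidChromNum [Fintype V] :
    ∃ c : V → Fin (rlidChromNum G), IsRlidColoring G c :=
  Nat.sInf_mem (s := {k : ℕ | ∃ c : V → Fin k, IsRlidColoring G c})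
    ⟨_, exists_isRlidColoring_card⟩

/-- For a finite graph `G` of order `n` with maximal twin-free induced subgraph
`G/R`, one has `log₂(ω(G/R)) + 1 ≤ χ_rlid(G) ≤ n`, i.e. `ω(G/R) ≤ 2 ^ (χ_rlid(G) − 1)` and
`χ_rlid(G) ≤ n`. -/
theorem rlid_bounds {V : Type*} [Fintype V] (G : SimpleGraph V)
    (T : Set V) (hT : IsTwinRepSet G T) :
    (G.induce T).cliqueNum ≤ 2 ^ (rlidChromNum G - 1) ∧
    rlidChromNum G ≤ Fintype.card V := by
  obtain ⟨c, hc⟩ := exists_isRlidColoring_rlidChromNum (G := G)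
  obtain ⟨K, hK⟩ := (G.induce T).exists_isNClique_cliqueNum
  rw [isNClique_induce_iff] at hK
  refine ⟨hK.card_eq ▸ hc.card_le_of_isClique hK.isClique ?_, rlidChromNum_le_card⟩
  exact hT.injOn_closedNbhd.mono (by simp +contextual [Set.subset_def])
end

section
/- Let k ≥ 3 be an integer and let G be a finite connected twin-free simple graph. Then G admits a proper coloring with k colors if and only if the graph G* admits an rlid-coloring with k colors. -/
open SimpleGraph Set

variable {V : Type*}

/-- The vertex set of `G*`: the original vertices, one internal vertex `(u,v)` for each
oriented edge `uv` (so each edge `uv` of `G` is replaced by the path `u-(u,v)-(v,u)-v`),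
and one pendant vertex attached to each original vertex. -/
def starVerts (G : SimpleGraph V) : Type _ := V ⊕ {p : V × V // G.Adj p.1 p.2} ⊕ V

/-- The graph `G*` obtained from `G` by subdividing each edge `uv` into a path
`u - a_{uv} - b_{uv} - v` of length 3 (here `a_{uv} = (u,v)` and `b_{uv} = (v,u)`) and
attaching a new pendant vertex (leaf) to each original vertex of `G`. -/
def GStar (G : SimpleGraph V) : SimpleGraph (starVerts G) :=
  SimpleGraph.fromRel (fun x y =>
    match x, y with
    | Sum.inl u, Sum.inr (Sum.inl p) => u = p.1.1
    | Sum.inl u, Sum.inr (Sum.inr w) => u = w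
    | Sum.inr (Sum.inl p), Sum.inr (Sum.inl q) => p.1.1 = q.1.2 ∧ p.1.2 = q.1.1
    | _, _ => False)

/-!
Given a proper coloring `C` of `G`, color `G*` by keeping `C` on the original vertices, giving
both subdivision vertices of an edge `uv` one color outside `{C u, C v}` (here `k ≥ 3` is used),
and giving the leaf at `u` a color that occurs nowhere else on `N[u]`, if there is one. Then a
subdivision vertex or leaf next to `u` sees at most two colors, one of them `C u`, whereas `N[u]`
carries at least two colors besides `C u` unless `u` is isolated (and then `u` and its leaf are
twins). The two subdivision vertices of `uv` are told apart by `C u ≠ C v`.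

Conversely, the color sets of the two subdivision vertices of an edge `uv` differ at most in
`c u` versus `c v`, so an rlid-coloring of `G*` is proper on the original vertices.
-/

abbrev Arc (G : SimpleGraph V) := {p : V × V // G.Adj p.1 p.2}

def Arc.reverse {G : SimpleGraph V} (p : Arc G) : Arc G := ⟨p.1.swap, p.2.symm⟩

@[simp] lemma Arc.reverse_reverse {G : SimpleGraph V} (p : Arc G) : p.reverse.reverse = p := rfl

lemma mem_closedNbhd {G : SimpleGraph V} {x y : V} : y ∈ closedNbhd G x ↔ y = x ∨ G.Adj x y :=
  Iff.rfl

namespace starVerts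

variable {G : SimpleGraph V}

def orig (u : V) : starVerts G := Sum.inl u

def arc (p : Arc G) : starVerts G := Sum.inr (Sum.inl p)

def leaf (w : V) : starVerts G := Sum.inr (Sum.inr w)

@[elab_as_elim, induction_eliminator]
def recOrigArcLeaf {motive : starVerts G → Sort*} (orig : ∀ u, motive (orig u))
    (arc : ∀ p, motive (arc p)) (leaf : ∀ w, motive (leaf w)) : ∀ x, motive x
  | Sum.inl u => orig u
  | Sum.inr (Sum.inl p) => arc p
  | Sum.inr (Sum.inr w) => leaf w

@[simp] lemma orig_inj {u v : V} : (orig u : starVerts G) = orig v ↔ u = v :=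
  Sum.inl_injective.eq_iff
@[simp] lemma arc_inj {p q : Arc G} : arc p = arc q ↔ p = q :=
  Sum.inr_injective.eq_iff.trans Sum.inl_injective.eq_iff
@[simp] lemma leaf_inj {u v : V} : (leaf u : starVerts G) = leaf v ↔ u = v :=
  Sum.inr_injective.eq_iff.trans Sum.inr_injective.eq_iff
@[simp] lemma orig_ne_arc {u : V} {p : Arc G} : orig u ≠ arc p := Sum.inl_ne_inr
@[simp] lemma orig_ne_leaf {u w : V} : (orig u : starVerts G) ≠ leaf w := Sum.inl_ne_inr
@[simp] lemma arc_ne_leaf {p : Arc G} {w : V} : arc p ≠ leaf w :=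
  fun h => Sum.inl_ne_inr (Sum.inr_injective h)
@[simp] lemma arc_ne_orig {u : V} {p : Arc G} : arc p ≠ orig u := orig_ne_arc.symm
@[simp] lemma leaf_ne_orig {u w : V} : (leaf w : starVerts G) ≠ orig u := orig_ne_leaf.symm
@[simp] lemma leaf_ne_arc {p : Arc G} {w : V} : leaf w ≠ arc p := arc_ne_leaf.symm

end starVerts

open starVerts

section StarGraph

variable {G : SimpleGraph V}

@[simp] lemma gStar_adj_orig_orig (u v : V) : ¬ (GStar G).Adj (orig u) (orig v) := by
  rintro ⟨-, h | h⟩ <;> exact h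

@[simp] lemma gStar_adj_orig_arc (u : V) (p : Arc G) :
    (GStar G).Adj (orig u) (arc p) ↔ u = p.1.1 :=
  ⟨fun h => h.2.elim id False.elim, fun h => ⟨Sum.inl_ne_inr, Or.inl h⟩⟩

@[simp] lemma gStar_adj_orig_leaf (u w : V) :
    (GStar G).Adj (orig u) (leaf w) ↔ u = w :=
  ⟨fun h => h.2.elim id False.elim, fun h => ⟨Sum.inl_ne_inr, Or.inl h⟩⟩

@[simp] lemma gStar_adj_arc_arc (p q : Arc G) :
    (GStar G).Adj (arc p) (arc q) ↔ q = p.reverse := by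
  have hrev : q = p.reverse ↔ p.1.1 = q.1.2 ∧ p.1.2 = q.1.1 := by
    simp only [Subtype.ext_iff, Prod.ext_iff, Arc.reverse, Prod.fst_swap, Prod.snd_swap]
    tauto
  rw [hrev]
  refine ⟨fun ⟨_, h⟩ => h.elim id fun h' => ⟨h'.2.symm, h'.1.symm⟩,
    fun h => ⟨?_, Or.inl h⟩⟩
  rintro ⟨⟩
  exact p.2.ne h.1

@[simp] lemma gStar_adj_arc_leaf (p : Arc G) (w : V) : ¬ (GStar G).Adj (arc p) (leaf w) := by
  rintro ⟨-, h | h⟩ <;> exact h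

@[simp] lemma gStar_adj_arc_orig (p : Arc G) (u : V) :
    (GStar G).Adj (arc p) (orig u) ↔ u = p.1.1 :=
  (GStar G).adj_comm _ _ |>.trans (gStar_adj_orig_arc u p)

@[simp] lemma gStar_adj_leaf_orig (w u : V) : (GStar G).Adj (leaf w) (orig u) ↔ u = w :=
  (GStar G).adj_comm _ _ |>.trans (gStar_adj_orig_leaf u w)

@[simp] lemma gStar_adj_leaf_arc (w : V) (p : Arc G) : ¬ (GStar G).Adj (leaf w) (arc p) :=
  fun h => gStar_adj_arc_leaf p w h.symm

@[simp] lemma gStar_adj_leaf_leaf (w w' : V) :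
    ¬ (GStar G).Adj (leaf w : starVerts G) (leaf w') := by
  rintro ⟨-, h | h⟩ <;> exact h

lemma mem_closedNbhd_gStar_orig {u : V} {y : starVerts G} :
    y ∈ closedNbhd (GStar G) (orig u) ↔
      y = orig u ∨ y = leaf u ∨ ∃ p : Arc G, p.1.1 = u ∧ y = arc p := by
  induction y <;> simp [mem_closedNbhd, eq_comm]

lemma closedNbhd_gStar_arc (p : Arc G) :
    closedNbhd (GStar G) (arc p) = {arc p, orig p.1.1, arc p.reverse} := by
  ext y
  induction y <;> simp [mem_closedNbhd]

lemma closedNbhd_gStar_leaf (w : V) :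
    closedNbhd (GStar G) (leaf w) = {leaf w, orig w} := by
  ext y
  induction y <;> simp [mem_closedNbhd]

end StarGraph

lemma image_closedNbhd_gStar_arc {G : SimpleGraph V} {α : Type*} (c : starVerts G → α)
    (p : Arc G) :
    c '' closedNbhd (GStar G) (arc p) = {c (arc p), c (orig p.1.1), c (arc p.reverse)} := by
  simp [closedNbhd_gStar_arc, image_insert_eq]

lemma IsRlidColoring.orig_ne_of_adj {G : SimpleGraph V} {k : ℕ} {c : starVerts G → Fin k}
    (hc : IsRlidColoring (GStar G) c) {u v : V} (huv : G.Adj u v) : c (orig u) ≠ c (orig v) := by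
  intro hcuv
  let p : Arc G := ⟨(u, v), huv⟩
  refine hc (arc p) (arc p.reverse) ((gStar_adj_arc_arc _ _).2 rfl) (fun hN => huv.ne ?_) ?_
  · have hu : orig u ∈ closedNbhd (GStar G) (arc p.reverse) :=
      hN ▸ by simp [closedNbhd_gStar_arc, p]
    simpa [closedNbhd_gStar_arc, p, Arc.reverse] using hu
  · simp only [image_closedNbhd_gStar_arc, Arc.reverse_reverse]
    change {_, c (orig u), _} = ({_, c (orig v), _} : Set (Fin k))
    rw [hcuv]
    ext
    simp only [mem_insert_iff, mem_singleton_iff]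
    tauto

section ThirdColor

variable {k : ℕ}

lemma compl_pair_nonempty (hk : 3 ≤ k) (a b : Fin k) : ({a, b}ᶜ : Finset (Fin k)).Nonempty := by
  rw [← Finset.card_pos, Finset.card_compl, Fintype.card_fin]
  have := Finset.card_le_two (a := a) (b := b)
  omega

def thirdColor (hk : 3 ≤ k) (a b : Fin k) : Fin k :=
  ({a, b}ᶜ : Finset (Fin k)).min' (compl_pair_nonempty hk a b)

lemma thirdColor_ne (hk : 3 ≤ k) (a b : Fin k) :
    thirdColor hk a b ≠ a ∧ thirdColor hk a b ≠ b := by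
  have h := Finset.min'_mem _ (compl_pair_nonempty hk a b)
  rw [Finset.mem_compl, Finset.mem_insert, Finset.mem_singleton, not_or] at h
  exact h

lemma thirdColor_comm (hk : 3 ≤ k) (a b : Fin k) : thirdColor hk a b = thirdColor hk b a := by
  simp only [thirdColor, Finset.pair_comm a b]

end ThirdColor

section StarColoring

variable {G : SimpleGraph V} {k : ℕ} (C : G.Coloring (Fin k)) (hk : 3 ≤ k)

def arcColor (p : Arc G) : Fin k := thirdColor hk (C p.1.1) (C p.1.2)

lemma arcColor_reverse (p : Arc G) : arcColor C hk p.reverse = arcColor C hk p :=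
  thirdColor_comm hk _ _

lemma arcColor_ne (p : Arc G) : arcColor C hk p ≠ C p.1.1 ∧ arcColor C hk p ≠ C p.1.2 :=
  thirdColor_ne hk _ _

open Classical in
noncomputable def leafColor (u : V) : Fin k :=
  if h : ∃ x, x ≠ C u ∧ ∀ p : Arc G, p.1.1 = u → x ≠ arcColor C hk p then h.choose
  else C u

noncomputable def starColoring : starVerts G → Fin k :=
  Sum.elim (fun u => C u) (Sum.elim (arcColor C hk) (leafColor C hk))

lemma image_starColoring_arc (p : Arc G) :
    starColoring C hk '' closedNbhd (GStar G) (arc p) = {arcColor C hk p, C p.1.1} := by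
  rw [image_closedNbhd_gStar_arc]
  change {arcColor C hk p, C p.1.1, arcColor C hk p.reverse} = _
  rw [arcColor_reverse, insert_comm, pair_eq_singleton, pair_comm]

lemma image_starColoring_leaf (w : V) :
    starColoring C hk '' closedNbhd (GStar G) (leaf w) = {leafColor C hk w, C w} := by
  rw [closedNbhd_gStar_leaf, image_pair]
  rfl

lemma exists_mem_image_starColoring_orig {u v : V} (huv : G.Adj u v) (a : Fin k) :
    ∃ x ∈ starColoring C hk '' closedNbhd (GStar G) (orig u), x ≠ C u ∧ x ≠ a := by
  have hmem_arc (p : Arc G) (hp : p.1.1 = u) :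
      arcColor C hk p ∈ starColoring C hk '' closedNbhd (GStar G) (orig u) :=
    ⟨arc p, mem_closedNbhd_gStar_orig.2 (Or.inr (Or.inr ⟨p, hp, rfl⟩)), rfl⟩
  by_cases hfree : ∃ x, x ≠ C u ∧ ∀ p : Arc G, p.1.1 = u → x ≠ arcColor C hk p
  · -- both the leaf color and the color of the arc towards `v` are new, and they differ
    obtain ⟨hne, harc⟩ : leafColor C hk u ≠ C u ∧
        ∀ p : Arc G, p.1.1 = u → leafColor C hk u ≠ arcColor C hk p := by
      rw [leafColor, dif_pos hfree]
      exact hfree.choose_spec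
    have hleaf_mem : leafColor C hk u ∈ starColoring C hk '' closedNbhd (GStar G) (orig u) :=
      ⟨leaf u, mem_closedNbhd_gStar_orig.2 (Or.inr (Or.inl rfl)), rfl⟩
    by_cases ha : leafColor C hk u = a
    · exact ⟨_, hmem_arc ⟨(u, v), huv⟩ rfl, (arcColor_ne C hk _).1,
        ha ▸ (harc _ rfl).symm⟩
    · exact ⟨_, hleaf_mem, hne, ha⟩
  · -- every color other than `C u` already occurs on an arc at `u`
    push Not at hfree
    obtain ⟨hne_u, hne_a⟩ := thirdColor_ne hk (C u) a
    obtain ⟨p, hp, hx⟩ := hfree _ hne_u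
    exact ⟨_, hx ▸ hmem_arc p hp, hne_u, hne_a⟩

lemma starColoring_image_orig_ne_arc (p : Arc G) :
    starColoring C hk '' closedNbhd (GStar G) (orig p.1.1) ≠
      starColoring C hk '' closedNbhd (GStar G) (arc p) := by
  obtain ⟨x, hx, hxu, hxa⟩ := exists_mem_image_starColoring_orig C hk p.2 (arcColor C hk p)
  rw [image_starColoring_arc]
  exact ne_of_mem_of_not_mem' hx (by simp [hxu, hxa])

lemma starColoring_image_orig_ne_leaf {u : V}
    (hN : closedNbhd (GStar G) (orig u) ≠ closedNbhd (GStar G) (leaf u)) :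
    starColoring C hk '' closedNbhd (GStar G) (orig u) ≠
      starColoring C hk '' closedNbhd (GStar G) (leaf u) := by
  obtain ⟨v, huv⟩ : ∃ v, G.Adj u v := by
    by_contra! hiso
    refine hN (ext fun y => ?_)
    have hno_arc : ¬ ∃ p : Arc G, p.1.1 = u ∧ y = arc p := by
      rintro ⟨p, rfl, -⟩
      exact hiso _ p.2
    rw [mem_closedNbhd_gStar_orig, closedNbhd_gStar_leaf, mem_insert_iff, mem_singleton_iff,
      or_iff_left hno_arc, or_comm]
  obtain ⟨x, hx, hxu, hxa⟩ := exists_mem_image_starColoring_orig C hk huv (leafColor C hk u)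
  rw [image_starColoring_leaf]
  exact ne_of_mem_of_not_mem' hx (by simp [hxu, hxa])

lemma starColoring_image_arc_ne_reverse (p : Arc G) :
    starColoring C hk '' closedNbhd (GStar G) (arc p) ≠
      starColoring C hk '' closedNbhd (GStar G) (arc p.reverse) := by
  rw [image_starColoring_arc, image_starColoring_arc, arcColor_reverse]
  refine ne_of_mem_of_not_mem' (mem_insert_of_mem _ rfl) ?_
  simp [Arc.reverse, (arcColor_ne C hk p).1.symm, C.valid p.2]

lemma isRlidColoring_starColoring : IsRlidColoring (GStar G) (starColoring C hk) := by
  intro x y hxy hN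
  induction x <;> induction y <;>
    simp only [gStar_adj_orig_orig, gStar_adj_orig_arc, gStar_adj_orig_leaf, gStar_adj_arc_orig,
      gStar_adj_arc_arc, gStar_adj_arc_leaf, gStar_adj_leaf_orig, gStar_adj_leaf_arc,
      gStar_adj_leaf_leaf] at hxy
  case orig.arc u p =>
    subst hxy
    exact starColoring_image_orig_ne_arc C hk p
  case orig.leaf u w =>
    subst hxy
    exact starColoring_image_orig_ne_leaf C hk hN
  case arc.orig p u =>
    subst hxy
    exact (starColoring_image_orig_ne_arc C hk p).symm
  case arc.arc p q =>
    subst hxy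
    exact starColoring_image_arc_ne_reverse C hk p
  case leaf.orig w u =>
    subst hxy
    exact (starColoring_image_orig_ne_leaf C hk hN.symm).symm

end StarColoring

theorem colorable_iff_star_rlid_general {V : Type*} (G : SimpleGraph V) (k : ℕ) (hk : 3 ≤ k) :
    G.Colorable k ↔ ∃ c : starVerts G → Fin k, IsRlidColoring (GStar G) c := by
  constructor
  · rintro ⟨C⟩
    exact ⟨starColoring C hk, isRlidColoring_starColoring C hk⟩
  · rintro ⟨c, hc⟩
    exact ⟨Coloring.mk (fun u => c (orig u)) hc.orig_ne_of_adj⟩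

/-- for `k ≥ 3` and a finite connected twin-free graph `G`, `G` has a proper
`k`-coloring iff `G*` has an rlid-coloring with `k` colors. -/
theorem colorable_iff_star_rlid {V : Type*} [Fintype V] (G : SimpleGraph V)
    (hconn : G.Connected) (htf : TwinFree G) (k : ℕ) (hk : 3 ≤ k) :
    G.Colorable k ↔ ∃ c : starVerts G → Fin k, IsRlidColoring (GStar G) c :=
  colorable_iff_star_rlid_general G k hk
end

section
/- Let G be a finite connected bipartite simple graph with at least 3 vertices. Then χ_rlid(G) ≤ 3. -/
open SimpleGraph Set

variable {V : Type*}

section RlidAux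

variable {V : Type*} {G : SimpleGraph V}

private lemma fin2_trick : ∀ x y z : Fin 2, x ≠ y → (x = z ↔ ¬ y = z) := by decide

private lemma fin2_trick2 : ∀ x y z : Fin 2, ((x = y) ↔ (x = z)) → y ≠ z → False := by decide

private lemma fin2_trick3 : ∀ x y z : Fin 2, x ≠ y → y ≠ z → x ≠ z → False := by decide

private lemma walk_parity (C : G.Coloring (Fin 2)) {a b : V} (p : G.Walk a b) :
    (C a = C b) ↔ Even p.length := by
  induction p with
  | nil => simp
  | @cons a x b h p ih =>
    rw [SimpleGraph.Walk.length_cons, Nat.even_add_one, ← ih]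
    exact fin2_trick _ _ _ (C.valid h)

private lemma dist_parity (hconn : G.Connected) (C : G.Coloring (Fin 2)) (r v : V) :
    (C r = C v) ↔ Even (G.dist r v) := by
  obtain ⟨p, hp⟩ := hconn.exists_walk_length_eq_dist r v
  rw [← hp]
  exact walk_parity C p

private lemma adj_dist_succ (hconn : G.Connected) (C : G.Coloring (Fin 2)) (r : V) {u v : V}
    (h : G.Adj u v) :
    G.dist r v = G.dist r u + 1 ∨ G.dist r u = G.dist r v + 1 := by
  have h1 : G.dist r v ≤ G.dist r u + 1 := by
    calc G.dist r v ≤ G.dist r u + G.dist u v := hconn.dist_triangle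
    _ = G.dist r u + 1 := by rw [SimpleGraph.dist_eq_one_iff_adj.mpr h]
  have h2 : G.dist r u ≤ G.dist r v + 1 := by
    calc G.dist r u ≤ G.dist r v + G.dist v u := hconn.dist_triangle
    _ = G.dist r v + 1 := by rw [SimpleGraph.dist_eq_one_iff_adj.mpr h.symm]
  have hne : G.dist r u ≠ G.dist r v := by
    intro he
    have p1 := dist_parity hconn C r u
    have p2 := dist_parity hconn C r v
    rw [he] at p1
    exact fin2_trick2 _ _ _ (p1.trans p2.symm) (C.valid h)
  omega

private lemma exists_parent (hconn : G.Connected) {r v : V} (h : 0 < G.dist r v) :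
    ∃ w, G.Adj v w ∧ G.dist r w + 1 = G.dist r v := by
  obtain ⟨p, hp⟩ := hconn.exists_walk_length_eq_dist r v
  rcases hq : p.reverse with _ | ⟨hadj, q⟩
  · exfalso
    have : p.length = 0 := by
      have := congrArg SimpleGraph.Walk.length hq
      simpa [SimpleGraph.Walk.length_reverse] using this
    omega
  · rename_i w
    refine ⟨w, hadj, ?_⟩
    have hlen : p.length = q.length + 1 := by
      have := congrArg SimpleGraph.Walk.length hq
      simpa [SimpleGraph.Walk.length_reverse] using this
    have hle : G.dist r w ≤ q.length := by
      have := SimpleGraph.dist_le q.reverse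
      simpa [SimpleGraph.Walk.length_reverse, SimpleGraph.dist_comm] using this
    have hge : G.dist r v ≤ G.dist r w + 1 := by
      calc G.dist r v ≤ G.dist r w + G.dist w v := hconn.dist_triangle
      _ = G.dist r w + 1 := by
          rw [SimpleGraph.dist_eq_one_iff_adj.mpr hadj.symm]
    omega

private lemma exists_dist_eq_two (hconn : G.Connected) {r : V} :
    ∀ n, ∀ x : V, G.dist r x = n → 2 ≤ n → ∃ y, G.dist r y = 2 := by
  intro n
  induction n using Nat.strong_induction_on with
  | _ n ih =>
    intro x hx h2
    rcases eq_or_lt_of_le h2 with he | hlt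
    · exact ⟨x, by omega⟩
    · obtain ⟨w, _, hw⟩ := exists_parent hconn (show 0 < G.dist r x by omega)
      exact ih (n - 1) (by omega) w (by omega) (by omega)

private lemma exists_good_root [Fintype V] (hconn : G.Connected) (hcard : 3 ≤ Fintype.card V)
    (C : G.Coloring (Fin 2)) : ∃ r y : V, G.dist r y = 2 := by
  letI := Classical.decEq V
  by_cases h : ∃ r x : V, 2 ≤ G.dist r x
  · obtain ⟨r, x, hx⟩ := h
    exact ⟨r, exists_dist_eq_two hconn _ x rfl hx⟩
  · exfalso
    push_neg at h
    have hadj : ∀ a b : V, a ≠ b → G.Adj a b := by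
      intro a b hne
      have h1 := hconn.pos_dist_of_ne hne
      have h2 := h a b
      exact SimpleGraph.dist_eq_one_iff_adj.mp (by omega)
    obtain ⟨a, b, hab⟩ := Fintype.exists_pair_of_one_lt_card (α := V) (by omega)
    obtain ⟨e, hea, heb⟩ : ∃ e : V, e ≠ a ∧ e ≠ b := by
      by_contra hc
      push_neg at hc
      have hsub : (Finset.univ : Finset V) ⊆ {a, b} := by
        intro x _
        rcases eq_or_ne x a with rfl | hx
        · simp
        · simp [hc x hx]
      have := Finset.card_le_card hsub
      have h2 : ({a, b} : Finset V).card ≤ 2 := Finset.card_insert_le _ _ |>.trans (by simp)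
      simp only [Finset.card_univ] at this
      omega
    exact fin2_trick3 _ _ _ (C.valid (hadj a b hab)) (C.valid (hadj b e heb.symm))
      (C.valid (hadj a e hea.symm))

end RlidAux

section RlidColoring

variable {V : Type*} {G : SimpleGraph V}

open scoped Classical in
/-- The rlid coloring of a connected bipartite graph: based on distance from root mod 4,
with special colors for vertices having no neighbor farther from the root. -/
private noncomputable def rlidCol (G : SimpleGraph V) (r : V) : V → Fin 3 := fun v =>
  if G.dist r v % 4 = 0 then 0
  else if G.dist r v % 4 = 2 then 1
  else if ∃ w, G.Adj v w ∧ G.dist r w = G.dist r v + 1 then 2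
  else if G.dist r v % 4 = 1 then 0
  else 1

private lemma rlidCol_m0 {r v : V} (h : G.dist r v % 4 = 0) : rlidCol G r v = 0 := by
  simp [rlidCol, h]

private lemma rlidCol_m2 {r v : V} (h : G.dist r v % 4 = 2) : rlidCol G r v = 1 := by
  simp [rlidCol, h]

private lemma rlidCol_open {r v : V} (h : G.dist r v % 4 = 1 ∨ G.dist r v % 4 = 3)
    (h2 : ∃ w, G.Adj v w ∧ G.dist r w = G.dist r v + 1) : rlidCol G r v = 2 := by
  rcases h with h | h <;> simp [rlidCol, h, h2]

private lemma rlidCol_c1 {r v : V} (h : G.dist r v % 4 = 1)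
    (h2 : ¬∃ w, G.Adj v w ∧ G.dist r w = G.dist r v + 1) : rlidCol G r v = 0 := by
  simp [rlidCol, h, h2]

private lemma rlidCol_c3 {r v : V} (h : G.dist r v % 4 = 3)
    (h2 : ¬∃ w, G.Adj v w ∧ G.dist r w = G.dist r v + 1) : rlidCol G r v = 1 := by
  simp [rlidCol, h, h2]

end RlidColoring

/-- A finite connected bipartite graph with at least 3 vertices satisfies
`χ_rlid(G) ≤ 3`. (Bipartite = the vertex set splits into two independent sets,
i.e. `G` is 2-colorable.) -/
theorem rlid_le_three_of_bipartite {V : Type*} [Fintype V] (G : SimpleGraph V)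
    (hconn : G.Connected) (hcard : 3 ≤ Fintype.card V)
    (hbip : G.Colorable 2) :
    rlidChromNum G ≤ 3 := by
  classical
  obtain ⟨C⟩ := hbip
  obtain ⟨r, y₀, hy₀⟩ := exists_good_root hconn hcard C
  set c : V → Fin 3 := rlidCol G r with hcdef
  have memN : ∀ a w : V, w ∈ closedNbhd G a ↔ (w = a ∨ G.Adj a w) := by
    intro a w
    simp [closedNbhd, Set.mem_insert_iff, SimpleGraph.mem_neighborSet]
  have not_mem_img : ∀ (a : V) (x : Fin 3), (∀ w, (w = a ∨ G.Adj a w) → c w ≠ x) →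
      x ∉ c '' closedNbhd G a := by
    rintro a x hall ⟨w, hw, hcw⟩
    exact hall w ((memN a w).mp hw) hcw
  have hds : ∀ {u v : V}, G.Adj u v →
      G.dist r v = G.dist r u + 1 ∨ G.dist r u = G.dist r v + 1 :=
    fun h => adj_dist_succ hconn C r h
  have key : ∀ u v : V, G.Adj u v → G.dist r v = G.dist r u + 1 →
      c '' closedNbhd G u ≠ c '' closedNbhd G v := by
    intro u v huv hdv
    have hm : G.dist r u % 4 = 0 ∨ G.dist r u % 4 = 1 ∨ G.dist r u % 4 = 2 ∨
        G.dist r u % 4 = 3 := by omega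
    have build : ∀ x : Fin 3, x ∈ c '' closedNbhd G u → x ∉ c '' closedNbhd G v →
        c '' closedNbhd G u ≠ c '' closedNbhd G v := by
      intro x h1 h2 he
      rw [he] at h1
      exact h2 h1
    have build' : ∀ x : Fin 3, x ∈ c '' closedNbhd G v → x ∉ c '' closedNbhd G u →
        c '' closedNbhd G u ≠ c '' closedNbhd G v := by
      intro x h1 h2 he
      rw [he] at h2
      exact h2 h1
    rcases hm with hm | hm | hm | hm
    · -- dist r u ≡ 0 (mod 4)
      by_cases hOv : ∃ w, G.Adj v w ∧ G.dist r w = G.dist r v + 1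
      · -- v open : witness 1 ∈ P_v \ P_u
        obtain ⟨w, hvw, hw⟩ := hOv
        have h1v : (1 : Fin 3) ∈ c '' closedNbhd G v :=
          ⟨w, (memN v w).mpr (Or.inr hvw), rlidCol_m2 (by omega)⟩
        refine build' 1 h1v ?_
        apply not_mem_img
        intro z hz
        rcases hz with rfl | hadj
        · rw [hcdef, rlidCol_m0 hm]; decide
        · rcases hds hadj with h' | h'
          · by_cases hOz : ∃ w, G.Adj z w ∧ G.dist r w = G.dist r z + 1
            · rw [hcdef, rlidCol_open (by omega) hOz]; decide
            · rw [hcdef, rlidCol_c1 (by omega) hOz]; decide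
          · rw [hcdef, rlidCol_open (by omega) ⟨u, hadj.symm, by omega⟩]; decide
      · -- v closed : witness 2 ∈ P_u \ P_v
        have h2u : (2 : Fin 3) ∈ c '' closedNbhd G u := by
          by_cases hl : G.dist r u = 0
          · have hur : r = u := hconn.dist_eq_zero_iff.mp hl
            obtain ⟨w, hyw, hw⟩ := exists_parent hconn (show 0 < G.dist r y₀ by omega)
            have hadjrw : G.Adj r w := SimpleGraph.dist_eq_one_iff_adj.mp (by omega)
            exact ⟨w, (memN u w).mpr (Or.inr (hur ▸ hadjrw)),
              rlidCol_open (by omega) ⟨y₀, hyw.symm, by omega⟩⟩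
          · obtain ⟨w, huw, hw⟩ := exists_parent hconn (show 0 < G.dist r u by omega)
            exact ⟨w, (memN u w).mpr (Or.inr huw),
              rlidCol_open (by omega) ⟨u, huw.symm, by omega⟩⟩
        refine build 2 h2u ?_
        apply not_mem_img
        intro z hz
        rcases hz with rfl | hadj
        · rw [hcdef, rlidCol_c1 (by omega) hOv]; decide
        · rcases hds hadj with h' | h'
          · exact absurd ⟨z, hadj, h'⟩ hOv
          · rw [hcdef, rlidCol_m0 (by omega)]; decide
    · -- dist r u ≡ 1 (mod 4) : witness 0 ∈ P_u \ P_v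
      obtain ⟨w, huw, hw⟩ := exists_parent hconn (show 0 < G.dist r u by omega)
      have h0u : (0 : Fin 3) ∈ c '' closedNbhd G u :=
        ⟨w, (memN u w).mpr (Or.inr huw), rlidCol_m0 (by omega)⟩
      refine build 0 h0u ?_
      apply not_mem_img
      intro z hz
      rcases hz with rfl | hadj
      · rw [hcdef, rlidCol_m2 (by omega)]; decide
      · rcases hds hadj with h' | h'
        · by_cases hOz : ∃ w, G.Adj z w ∧ G.dist r w = G.dist r z + 1
          · rw [hcdef, rlidCol_open (by omega) hOz]; decide
          · rw [hcdef, rlidCol_c3 (by omega) hOz]; decide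
        · rw [hcdef, rlidCol_open (by omega) ⟨v, hadj.symm, by omega⟩]; decide
    · -- dist r u ≡ 2 (mod 4)
      by_cases hOv : ∃ w, G.Adj v w ∧ G.dist r w = G.dist r v + 1
      · -- v open : witness 0 ∈ P_v \ P_u
        obtain ⟨w, hvw, hw⟩ := hOv
        have h0v : (0 : Fin 3) ∈ c '' closedNbhd G v :=
          ⟨w, (memN v w).mpr (Or.inr hvw), rlidCol_m0 (by omega)⟩
        refine build' 0 h0v ?_
        apply not_mem_img
        intro z hz
        rcases hz with rfl | hadj
        · rw [hcdef, rlidCol_m2 hm]; decide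
        · rcases hds hadj with h' | h'
          · by_cases hOz : ∃ w, G.Adj z w ∧ G.dist r w = G.dist r z + 1
            · rw [hcdef, rlidCol_open (by omega) hOz]; decide
            · rw [hcdef, rlidCol_c3 (by omega) hOz]; decide
          · rw [hcdef, rlidCol_open (by omega) ⟨u, hadj.symm, by omega⟩]; decide
      · -- v closed : witness 2 ∈ P_u \ P_v
        obtain ⟨w, huw, hw⟩ := exists_parent hconn (show 0 < G.dist r u by omega)
        have h2u : (2 : Fin 3) ∈ c '' closedNbhd G u :=
          ⟨w, (memN u w).mpr (Or.inr huw),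
            rlidCol_open (by omega) ⟨u, huw.symm, by omega⟩⟩
        refine build 2 h2u ?_
        apply not_mem_img
        intro z hz
        rcases hz with rfl | hadj
        · rw [hcdef, rlidCol_c3 (by omega) hOv]; decide
        · rcases hds hadj with h' | h'
          · exact absurd ⟨z, hadj, h'⟩ hOv
          · rw [hcdef, rlidCol_m2 (by omega)]; decide
    · -- dist r u ≡ 3 (mod 4) : witness 1 ∈ P_u \ P_v
      obtain ⟨w, huw, hw⟩ := exists_parent hconn (show 0 < G.dist r u by omega)
      have h1u : (1 : Fin 3) ∈ c '' closedNbhd G u :=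
        ⟨w, (memN u w).mpr (Or.inr huw), rlidCol_m2 (by omega)⟩
      refine build 1 h1u ?_
      apply not_mem_img
      intro z hz
      rcases hz with rfl | hadj
      · rw [hcdef, rlidCol_m0 (by omega)]; decide
      · rcases hds hadj with h' | h'
        · by_cases hOz : ∃ w, G.Adj z w ∧ G.dist r w = G.dist r z + 1
          · rw [hcdef, rlidCol_open (by omega) hOz]; decide
          · rw [hcdef, rlidCol_c1 (by omega) hOz]; decide
        · rw [hcdef, rlidCol_open (by omega) ⟨v, hadj.symm, by omega⟩]; decide
  have hcol : IsRlidColoring G c := by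
    intro u v huv _
    rcases hds huv with h | h
    · exact key u v huv h
    · exact (key v u huv.symm h).symm
  show sInf {k : ℕ | ∃ c : V → Fin k, IsRlidColoring G c} ≤ 3
  exact Nat.sInf_le ⟨c, hcol⟩
end

section
/- There is no finite simple graph G with χ_rlid(G) = 2; that is, if a finite simple graph G admits an rlid-coloring with 2 colors, then it admits an rlid-coloring with 1 color. -/
open SimpleGraph Set

variable {V : Type*}

lemma mem_closedNbhd_self (G : SimpleGraph V) (v : V) : v ∈ closedNbhd G v :=
  Set.mem_insert _ _

lemma mem_closedNbhd_of_adj {G : SimpleGraph V} {u v : V} (h : G.Adj u v) :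
    v ∈ closedNbhd G u := Set.mem_insert_of_mem _ h

lemma fin2_cover (a b x : Fin 2) (h : a ≠ b) : x = a ∨ x = b := by
  revert h; revert a b x; decide

lemma rlid_aux {G : SimpleGraph V} {c : V → Fin 2} (hc : IsRlidColoring G c)
    {u v : V} (huv : G.Adj u v) (hcc : c u = c v) {a' : Fin 2} (ha' : a' ≠ c u)
    (ht : a' ∈ c '' closedNbhd G v) (hs : a' ∉ c '' closedNbhd G u) : False := by
  obtain ⟨w, hw, hcw⟩ := ht
  have hwv : G.Adj v w := by
    rcases hw with h | h
    · exact (ha' (hcw.symm.trans (by rw [h, ← hcc]))).elim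
    · exact h
  have huniv : ∀ x : Fin 2, x = c u ∨ x = a' := fun x => fin2_cover _ _ x (Ne.symm ha')
  have himw : c '' closedNbhd G w = Set.univ := by
    apply Set.eq_univ_iff_forall.2
    intro x
    rcases huniv x with rfl | rfl
    · exact ⟨v, mem_closedNbhd_of_adj hwv.symm, hcc.symm⟩
    · exact ⟨w, mem_closedNbhd_self _ _, hcw⟩
  have himv : c '' closedNbhd G v = Set.univ := by
    apply Set.eq_univ_iff_forall.2
    intro x
    rcases huniv x with rfl | rfl
    · exact ⟨v, mem_closedNbhd_self _ _, hcc.symm⟩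
    · exact ⟨w, hw, hcw⟩
  have hNeq : closedNbhd G w = closedNbhd G v := by
    by_contra hne
    exact hc w v hwv.symm hne (himw.trans himv.symm)
  have hu : u ∈ closedNbhd G w := hNeq ▸ mem_closedNbhd_of_adj huv.symm
  rcases hu with h | h
  · exact ha' (((congrArg c h).trans hcw).symm)
  · exact hs ⟨w, mem_closedNbhd_of_adj h.symm, hcw⟩

lemma rlid_two_adj_eq {G : SimpleGraph V} {c : V → Fin 2} (hc : IsRlidColoring G c)
    {u v : V} (huv : G.Adj u v) : closedNbhd G u = closedNbhd G v := by
  by_contra hne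
  have him := hc u v huv hne
  by_cases hcc : c u = c v
  · obtain ⟨a', ha'⟩ : ∃ a' : Fin 2, a' ≠ c u := by
      rcases fin2_cover 0 1 (c u) (by decide) with h | h
      · exact ⟨1, by rw [h]; decide⟩
      · exact ⟨0, by rw [h]; decide⟩
    by_cases h1 : a' ∈ c '' closedNbhd G u
    · by_cases h2 : a' ∈ c '' closedNbhd G v
      · apply him
        ext x
        rcases fin2_cover (c u) a' x (Ne.symm ha') with rfl | rfl
        · exact ⟨fun _ => ⟨v, mem_closedNbhd_self _ _, hcc.symm⟩,
                 fun _ => ⟨u, mem_closedNbhd_self _ _, rfl⟩⟩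
        · exact ⟨fun _ => h2, fun _ => h1⟩
      · exact rlid_aux hc huv.symm hcc.symm (by rwa [hcc] at ha') h1 h2
    · by_cases h2 : a' ∈ c '' closedNbhd G v
      · exact rlid_aux hc huv hcc ha' h2 h1
      · apply him
        ext x
        rcases fin2_cover (c u) a' x (Ne.symm ha') with rfl | rfl
        · exact ⟨fun _ => ⟨v, mem_closedNbhd_self _ _, hcc.symm⟩,
                 fun _ => ⟨u, mem_closedNbhd_self _ _, rfl⟩⟩
        · exact ⟨fun h => absurd h h1, fun h => absurd h h2⟩
  · apply him
    have h1 : c '' closedNbhd G u = Set.univ := by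
      apply Set.eq_univ_iff_forall.2
      intro x
      rcases fin2_cover (c u) (c v) x hcc with rfl | rfl
      · exact ⟨u, mem_closedNbhd_self _ _, rfl⟩
      · exact ⟨v, mem_closedNbhd_of_adj huv, rfl⟩
    have h2 : c '' closedNbhd G v = Set.univ := by
      apply Set.eq_univ_iff_forall.2
      intro x
      rcases fin2_cover (c u) (c v) x hcc with rfl | rfl
      · exact ⟨u, mem_closedNbhd_of_adj huv.symm, rfl⟩
      · exact ⟨v, mem_closedNbhd_self _ _, rfl⟩
    rw [h1, h2]

/-- No finite graph has `χ_rlid(G) = 2`: any graph admitting an rlid-coloring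
with 2 colors also admits one with a single color. -/
theorem no_rlid_two {V : Type*} [Fintype V] (G : SimpleGraph V) :
    rlidChromNum G ≠ 2 ∧
    (∀ c : V → Fin 2, IsRlidColoring G c → ∃ c' : V → Fin 1, IsRlidColoring G c') := by
  have key : ∀ c : V → Fin 2, IsRlidColoring G c → ∃ c' : V → Fin 1, IsRlidColoring G c' := by
    intro c hc
    refine ⟨fun _ => 0, fun u v huv hne => absurd (rlid_two_adj_eq hc huv) hne⟩
  refine ⟨?_, key⟩
  intro h
  have hne : {k : ℕ | ∃ c : V → Fin k, IsRlidColoring G c}.Nonempty := by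
    by_contra hemp
    rw [Set.not_nonempty_iff_eq_empty] at hemp
    rw [rlidChromNum, hemp, Nat.sInf_empty] at h
    exact absurd h (by norm_num)
  have h2 : 2 ∈ {k : ℕ | ∃ c : V → Fin k, IsRlidColoring G c} := h ▸ Nat.sInf_mem hne
  obtain ⟨c, hc⟩ := h2
  obtain ⟨c', hc'⟩ := key c hc
  have h1 : rlidChromNum G ≤ 1 := Nat.sInf_le ⟨c', hc'⟩
  omega
end

section
/- Let G be a finite twin-free simple graph admitting an identifying code, and let γ_id(G) be the minimum cardinality of an identifying code of G. Then χ_rlid(G) ≤ γ_id(G) + 1. -/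
open SimpleGraph Set

variable {V : Type*}

/-- `C` is an identifying code of `G`: it is dominating (`N[v] ∩ C ≠ ∅` for all `v`) and
separating (`N[u] ∩ C ≠ N[v] ∩ C` for all `u ≠ v`). -/
def IsIdCode (G : SimpleGraph V) (C : Set V) : Prop :=
  (∀ v : V, (closedNbhd G v ∩ C).Nonempty) ∧
  (∀ u v : V, u ≠ v → closedNbhd G u ∩ C ≠ closedNbhd G v ∩ C)

/-- `γ_id(G)`: the minimum cardinality of an identifying code of `G`. -/
noncomputable def idCodeNum (G : SimpleGraph V) : ℕ :=
  sInf {n : ℕ | ∃ C : Finset V, IsIdCode G ↑C ∧ C.card = n}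

/-! Colour the vertices of an identifying code `C` pairwise differently and every other vertex
with one extra colour. Then the colour set of `N[v]` determines `N[v] ∩ C`, and these traces are
distinct for distinct vertices, so one colour more than `|C|` suffices. -/

def HasPrivateColorsOn {α : Type*} (c : V → α) (C : Set V) : Prop :=
  ∀ x ∈ C, ∀ y, c y = c x → y = x

theorem inter_eq_inter_of_image_eq {α : Type*} {c : V → α} {C A B : Set V}
    (hc : HasPrivateColorsOn c C) (hAB : c '' A = c '' B) : A ∩ C = B ∩ C := by
  suffices key : ∀ {A B : Set V}, c '' A = c '' B → A ∩ C ⊆ B ∩ C from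
    (key hAB).antisymm (key hAB.symm)
  intro A B hAB x ⟨hxA, hxC⟩
  obtain ⟨y, hyB, hyx⟩ : c x ∈ c '' B := hAB ▸ mem_image_of_mem c hxA
  exact ⟨hc x hxC y hyx ▸ hyB, hxC⟩

theorem isRlidColoring_of_isIdCode {k : ℕ} {G : SimpleGraph V} {C : Set V} {c : V → Fin k}
    (hC : IsIdCode G C) (hc : HasPrivateColorsOn c C) : IsRlidColoring G c :=
  fun u v hadj _ himg => hC.2 u v hadj.ne (inter_eq_inter_of_image_eq hc himg)

theorem exists_hasPrivateColorsOn (C : Finset V) :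
    ∃ c : V → Fin (C.card + 1), HasPrivateColorsOn c ↑C := by
  classical
  let c : V → Fin (C.card + 1) := fun v =>
    if h : v ∈ C then (C.equivFin ⟨v, h⟩).castSucc else Fin.last _
  refine ⟨c, fun x hx y hyx => ?_⟩
  have hx : x ∈ C := hx
  by_cases hy : y ∈ C
  · simp only [c, dif_pos hx, dif_pos hy] at hyx
    exact congrArg Subtype.val (C.equivFin.injective (Fin.castSucc_injective _ hyx))
  · simp only [c, dif_pos hx, dif_neg hy] at hyx
    exact absurd hyx (Fin.castSucc_lt_last _).ne'

theorem rlidChromNum_le_card_add_one {G : SimpleGraph V} {C : Finset V}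
    (hC : IsIdCode G ↑C) : rlidChromNum G ≤ C.card + 1 := by
  obtain ⟨c, hc⟩ := exists_hasPrivateColorsOn C
  exact Nat.sInf_le ⟨c, isRlidColoring_of_isIdCode hC hc⟩

theorem rlid_le_idCode_add_one_general {V : Type*} (G : SimpleGraph V)
    (hex : ∃ C : Finset V, IsIdCode G ↑C) :
    rlidChromNum G ≤ idCodeNum G + 1 := by
  obtain ⟨C₀, hC₀⟩ := hex
  obtain ⟨C, hC, hcard⟩ : idCodeNum G ∈ {n | ∃ C : Finset V, IsIdCode G ↑C ∧ C.card = n} :=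
    Nat.sInf_mem ⟨C₀.card, C₀, hC₀, rfl⟩
  exact hcard ▸ rlidChromNum_le_card_add_one hC

/-- For a finite twin-free graph admitting an identifying code,
`χ_rlid(G) ≤ γ_id(G) + 1`. -/
theorem rlid_le_idCode_add_one {V : Type*} [Fintype V] (G : SimpleGraph V)
    (htf : TwinFree G) (hex : ∃ C : Finset V, IsIdCode G ↑C) :
    rlidChromNum G ≤ idCodeNum G + 1 :=
  rlid_le_idCode_add_one_general G hex
end

section
/- Let G be a finite twin-free split graph with vertex set partitioned into a clique K of size k which is a maximal clique of G and an independent set S. Then there exists a subset S' ⊆ S with |S'| ≤ k − 1 such that for every pair of distinct vertices x, y ∈ K one has N[x] ∩ S' ≠ N[y] ∩ S'. -/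
/-!
For `x` in the clique `K`, `N[x] = K ∪ (N[x] ∩ S)`, so twin-freeness makes the traces `N[x] ∩ S`
pairwise distinct, and Bondy's theorem shrinks `S` to at most `|K| - 1` points on which the traces
stay distinct. Bondy's theorem is proved greedily: while two traces on `T` coincide, add a point of
`S` separating them; this strictly increases the number of distinct traces, which is `1` for
`T = ∅`, so `|T|` stays below that number.
-/

open SimpleGraph Set

variable {V : Type*}

namespace Set

variable {ι α : Type*} {F : ι → Set α}

theorem exists_mem_inter_insert_ne {x y : ι} {U : Set α} (T : Set α)
    (h : F x ∩ U ≠ F y ∩ U) : ∃ s ∈ U, F x ∩ insert s T ≠ F y ∩ insert s T := by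
  by_contra! hall
  refine h (Set.ext fun v => and_congr_left fun hv => ?_)
  simpa using congrArg (v ∈ ·) (hall v hv)

theorem ncard_image_inter_lt_ncard_image_inter_insert {K : Set ι} (hK : K.Finite) {T : Set α}
    {s : α} {x y : ι} (hx : x ∈ K) (hy : y ∈ K) (hxy : F x ∩ T = F y ∩ T)
    (hs : F x ∩ insert s T ≠ F y ∩ insert s T) :
    ((fun z => F z ∩ T) '' K).ncard < ((fun z => F z ∩ insert s T) '' K).ncard := by
  have hfactor : (fun z => F z ∩ T) '' K = (· ∩ T) '' ((fun z => F z ∩ insert s T) '' K) := by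
    rw [image_image]
    simp only [inter_assoc, inter_eq_right.mpr (subset_insert s T)]
  have hnotInj : ¬ InjOn (· ∩ T) ((fun z => F z ∩ insert s T) '' K) := fun hinj =>
    hs <| hinj (mem_image_of_mem _ hx) (mem_image_of_mem _ hy) <| by
      simpa only [inter_assoc, inter_eq_right.mpr (subset_insert s T)] using hxy
  rw [hfactor]
  exact lt_of_le_of_ne (ncard_image_le (hK.image _))
    (mt (ncard_image_iff (hK.image _)).mp hnotInj)

theorem exists_subset_card_le_injOn_inter_of_card_lt {K : Finset ι} {U : Finset α}
    (hU : InjOn (fun x => F x ∩ ↑U) ↑K) (T : Finset α) (hT : T ⊆ U)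
    (hlt : T.card < ((fun x => F x ∩ ↑T) '' ↑K).ncard) :
    ∃ S' ⊆ U, S'.card ≤ K.card - 1 ∧ InjOn (fun x => F x ∩ ↑S') ↑K := by
  classical
  have hle : ((fun x => F x ∩ ↑T) '' ↑K).ncard ≤ K.card := by
    simpa using ncard_image_le (s := (K : Set ι)) (f := fun x => F x ∩ ↑T)
  by_cases hfull : ((fun x => F x ∩ ↑T) '' ↑K).ncard = K.card
  · refine ⟨T, hT, by omega, injOn_of_ncard_image_eq ?_⟩
    simpa using hfull
  obtain ⟨x, hx, y, hy, hxyT, hxy⟩ : ∃ x ∈ (K : Set ι), ∃ y ∈ (K : Set ι),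
      F x ∩ ↑T = F y ∩ ↑T ∧ x ≠ y := by
    by_contra! hinj
    exact hfull (by simpa using InjOn.ncard_image hinj)
  obtain ⟨s, hsU, hs⟩ := exists_mem_inter_insert_ne (↑T) fun h => hxy (hU hx hy h)
  have hgrow := ncard_image_inter_lt_ncard_image_inter_insert K.finite_toSet hx hy hxyT hs
  have := Finset.card_insert_le s T
  exact exists_subset_card_le_injOn_inter_of_card_lt hU (insert s T)
    (Finset.insert_subset hsU hT) (by rw [Finset.coe_insert]; omega)
termination_by K.card - ((fun x => F x ∩ ↑T) '' ↑K).ncard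
decreasing_by
  classical
  have hle' : ((fun x => F x ∩ ↑(insert s T)) '' ↑K).ncard ≤ K.card := by
    simpa using ncard_image_le (s := (K : Set ι)) (f := fun x => F x ∩ ↑(insert s T))
  rw [Finset.coe_insert] at hle' ⊢
  omega

-- Bondy's theorem
theorem exists_subset_card_le_injOn_inter {K : Finset ι} {U : Finset α}
    (hU : InjOn (fun x => F x ∩ ↑U) ↑K) :
    ∃ S' ⊆ U, S'.card ≤ K.card - 1 ∧ InjOn (fun x => F x ∩ ↑S') ↑K := by
  rcases K.eq_empty_or_nonempty with rfl | hK
  · exact ⟨∅, Finset.empty_subset U, by simp, by simp⟩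
  refine exists_subset_card_le_injOn_inter_of_card_lt hU ∅ (Finset.empty_subset U) ?_
  simpa using ((Finset.coe_nonempty.mpr hK).image _).ncard_pos

end Set

namespace SimpleGraph

variable {G : SimpleGraph V} {K S : Set V} {x : V}

theorem closedNbhd_eq_union_inter (hK : G.IsClique K) (hx : x ∈ K)
    (hcover : ∀ v, v ∈ K ∨ v ∈ S) : closedNbhd G x = K ∪ (closedNbhd G x ∩ S) := by
  refine Subset.antisymm (fun v hv => ?_) (union_subset (fun v hv => ?_) inter_subset_left)
  · exact (hcover v).imp_right fun hvS => ⟨hv, hvS⟩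
  · rcases eq_or_ne x v with rfl | hxv
    · exact mem_insert x _
    · exact mem_insert_of_mem x (hK hx hv hxv)

theorem TwinFree.injOn_closedNbhd_inter (htf : TwinFree G) (hK : G.IsClique K)
    (hcover : ∀ v, v ∈ K ∨ v ∈ S) : InjOn (fun x => closedNbhd G x ∩ S) K :=
  fun x hx y hy hxy => htf x y <| by
    rw [closedNbhd_eq_union_inter hK hx hcover, closedNbhd_eq_union_inter hK hy hcover]
    exact congrArg (K ∪ ·) hxy

end SimpleGraph

theorem split_separating_subset_general {V : Type*} (G : SimpleGraph V)
    (htf : TwinFree G) (K S : Finset V)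
    (hpart : ∀ v : V, v ∈ K ↔ v ∉ S)
    (hK : G.IsClique ↑K) :
    ∃ S' : Finset V, S' ⊆ S ∧ S'.card ≤ K.card - 1 ∧
      ∀ x ∈ K, ∀ y ∈ K, x ≠ y →
        closedNbhd G x ∩ ↑S' ≠ closedNbhd G y ∩ ↑S' := by
  have hcover : ∀ v, v ∈ (K : Set V) ∨ v ∈ (S : Set V) := fun v => by
    simpa only [Finset.mem_coe, hpart] using em' (v ∈ S)
  obtain ⟨S', hS'S, hcard, hsep⟩ :=
    exists_subset_card_le_injOn_inter (htf.injOn_closedNbhd_inter hK hcover)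
  exact ⟨S', hS'S, hcard, fun x hx y hy hxy h => hxy (hsep hx hy h)⟩

/-- In a finite twin-free split graph whose vertex set is partitioned into a
maximal clique `K` (of size `k`) and an independent set `S`, there is a subset `S' ⊆ S` with
`|S'| ≤ k − 1` separating the closed neighborhoods of all pairs of distinct vertices of `K`. -/
theorem split_separating_subset {V : Type*} [Fintype V] [DecidableEq V] (G : SimpleGraph V)
    (htf : TwinFree G) (K S : Finset V)
    (hpart : ∀ v : V, v ∈ K ↔ v ∉ S)
    (hK : G.IsClique ↑K)
    (hS : ∀ u ∈ S, ∀ v ∈ S, ¬ G.Adj u v)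
    (hmax : ∀ v ∉ K, ∃ u ∈ K, ¬ G.Adj v u) :
    ∃ S' : Finset V, S' ⊆ S ∧ S'.card ≤ K.card - 1 ∧
      ∀ x ∈ K, ∀ y ∈ K, x ≠ y →
        closedNbhd G x ∩ ↑S' ≠ closedNbhd G y ∩ ↑S' :=
  split_separating_subset_general G htf K S hpart hK
end
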